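/- arXiv:2410.09434 — 2 statements merged into one kernel-verified Lean document; each statement's English description precedes it below -/
import Mathlib

section
/- Assume both the β-strong P-order and the γ-strong C-order assumptions hold for some β > 0 and γ > 0. Then every Greedy-Local matching M' satisfies w(M) ≤ min{1+β, max{1, β+γ}}·w(M') for every matching M of the instance. -/
/-!
Charging argument. An edge `e ∈ M ∖ M'` is blocked by the greedy rule either through its column,
by an edge of `M'` at an earlier `p` (weight ratio at most `β`, by the P-order), or through its
row, by an edge of `M'` at the same `p` that is at least as heavy (ratio at most `min 1 γ`, by the
C-order). The blocking edge lies in `M' ∖ M`, and since `M` is a matching each edge of `M'` blocks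
at most one edge of `M` through its column and at most one through its row. Hence
`w(M) ≤ max 1 (β + min 1 γ) · w(M')`, and `max 1 (β + min 1 γ) = min (1 + β) (max 1 (β + γ))`.
-/

/-- A matching of a bipartite instance with edge set `E ⊆ P × C`. -/
def IsBipMatching {s q : ℕ} (E M : Finset (Fin s × Fin q)) : Prop :=
  M ⊆ E ∧ ∀ e₁ ∈ M, ∀ e₂ ∈ M, e₁ ≠ e₂ → e₁.1 ≠ e₂.1 ∧ e₁.2 ≠ e₂.2

/-- The β-strong P-order assumption. -/
def StrongPOrder {s q : ℕ} (E : Finset (Fin s × Fin q)) (w : Fin s × Fin q → ℝ)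
    (β : ℝ) : Prop :=
  ∀ i j : Fin s, i < j → ∀ c : Fin q, (i, c) ∈ E → (j, c) ∈ E → w (j, c) ≤ β * w (i, c)

/-- The γ-strong C-order assumption. -/
def StrongCOrder {s q : ℕ} (E : Finset (Fin s × Fin q)) (w : Fin s × Fin q → ℝ)
    (γ : ℝ) : Prop :=
  ∀ i j : Fin q, i < j → ∀ p : Fin s, (p, i) ∈ E → (p, j) ∈ E → w (p, j) ≤ γ * w (p, i)

/-- A Greedy-Local matching. -/
def GreedyLocal {s q : ℕ} (E : Finset (Fin s × Fin q)) (w : Fin s × Fin q → ℝ)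
    (M' : Finset (Fin s × Fin q)) : Prop :=
  IsBipMatching E M' ∧ ∀ e ∈ E, e ∉ M' →
    (∃ i : Fin s, i < e.1 ∧ (i, e.2) ∈ M') ∨
    (∃ c' : Fin q, (e.1, c') ∈ M' ∧ w e ≤ w (e.1, c'))

open Finset

lemma Finset.sum_le_mul_sum_of_forall_exists_key_eq {α κ R : Type*} [Semiring R]
    [PartialOrder R] [IsOrderedRing R] {s t : Finset α} {f g : α → R} {K : R} (key : α → κ)
    (hkey : Set.InjOn key s) (hK : 0 ≤ K) (hg : ∀ b ∈ t, 0 ≤ g b)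
    (h : ∀ a ∈ s, ∃ b ∈ t, key b = key a ∧ f a ≤ K * g b) :
    ∑ a ∈ s, f a ≤ K * ∑ b ∈ t, g b := by
  classical
  choose! φ hφt hφkey hφle using h
  have hφinj : Set.InjOn φ s := fun a ha a' ha' hφ =>
    hkey ha ha' (by rw [← hφkey a ha, ← hφkey a' ha', hφ])
  calc ∑ a ∈ s, f a ≤ ∑ a ∈ s, K * g (φ a) := sum_le_sum hφle
    _ = K * ∑ b ∈ s.image φ, g b := by rw [sum_image hφinj, mul_sum]
    _ ≤ K * ∑ b ∈ t, g b := mul_le_mul_of_nonneg_left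
        (sum_le_sum_of_subset_of_nonneg (image_subset_iff.2 hφt) fun b hb _ => hg b hb) hK

section

variable {s q : ℕ} {E : Finset (Fin s × Fin q)} {w : Fin s × Fin q → ℝ}

lemma IsBipMatching.injOn_fst {M : Finset (Fin s × Fin q)} (hM : IsBipMatching E M) :
    Set.InjOn Prod.fst (M : Set (Fin s × Fin q)) := fun e₁ h₁ e₂ h₂ h => by
  by_contra hne
  exact (hM.2 e₁ h₁ e₂ h₂ hne).1 h

lemma IsBipMatching.injOn_snd {M : Finset (Fin s × Fin q)} (hM : IsBipMatching E M) :
    Set.InjOn Prod.snd (M : Set (Fin s × Fin q)) := fun e₁ h₁ e₂ h₂ h => by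
  by_contra hne
  exact (hM.2 e₁ h₁ e₂ h₂ hne).2 h

/-- When `c < c'` the C-order bounds `w (p, c')` instead, but together with `hle` it forces
`γ ≥ 1`. -/
lemma StrongCOrder.le_min_one_mul {γ : ℝ} (hordC : StrongCOrder E w γ)
    (hw : ∀ e ∈ E, 0 < w e) {p : Fin s} {c c' : Fin q} (hc : (p, c) ∈ E) (hc' : (p, c') ∈ E)
    (hne : c ≠ c') (hle : w (p, c) ≤ w (p, c')) : w (p, c) ≤ min 1 γ * w (p, c') := by
  have hpos := hw _ hc
  have hpos' := hw _ hc'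
  rcases hne.lt_or_gt with hlt | hgt
  · have := hordC c c' hlt p hc hc'
    have hγ : 1 ≤ γ := le_of_mul_le_mul_right (by linarith) hpos
    rwa [min_eq_left hγ, one_mul]
  · have := hordC c' c hgt p hc' hc
    rcases le_total 1 γ with hγ | hγ
    · rwa [min_eq_left hγ, one_mul]
    · rwa [min_eq_right hγ]

theorem sum_le_max_mul_sum_of_greedyLocal {β γ : ℝ} (hw : ∀ e ∈ E, 0 < w e) (hβ : 0 ≤ β)
    (hγ : 0 ≤ γ) (hordP : StrongPOrder E w β) (hordC : StrongCOrder E w γ)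
    {M' M : Finset (Fin s × Fin q)} (hM' : GreedyLocal E w M') (hM : IsBipMatching E M) :
    ∑ e ∈ M, w e ≤ max 1 (β + min 1 γ) * ∑ e ∈ M', w e := by
  classical
  set δ := min 1 γ
  set D := M \ M'
  set byColumn : Fin s × Fin q → Prop := fun e => ∃ i, i < e.1 ∧ (i, e.2) ∈ M'
  have hDM : ∀ (p : Fin s × Fin q → Prop) [DecidablePred p],
      (D.filter p : Set (Fin s × Fin q)) ⊆ M := fun _ _ _ he =>
    mem_coe.2 (mem_sdiff.1 (mem_filter.1 (mem_coe.1 he)).1).1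
  have hwM' : ∀ b ∈ M' \ M, 0 ≤ w b := fun b hb => (hw b (hM'.1.1 (mem_sdiff.1 hb).1)).le
  have hcol : ∑ e ∈ D with byColumn e, w e ≤ β * ∑ b ∈ M' \ M, w b := by
    refine sum_le_mul_sum_of_forall_exists_key_eq Prod.snd (hM.injOn_snd.mono (hDM _)) hβ hwM'
      fun e he => ?_
    obtain ⟨⟨heM, -⟩, i, hi, hiM'⟩ : (e ∈ M ∧ e ∉ M') ∧ byColumn e := by simpa [D] using he
    refine ⟨(i, e.2), mem_sdiff.2 ⟨hiM', fun hiM => hi.ne ?_⟩, rfl,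
      hordP i e.1 hi e.2 (hM'.1.1 hiM') (hM.1 heM)⟩
    exact congrArg Prod.fst (hM.injOn_snd hiM heM rfl)
  have hrow : ∑ e ∈ D with ¬byColumn e, w e ≤ δ * ∑ b ∈ M' \ M, w b := by
    refine sum_le_mul_sum_of_forall_exists_key_eq Prod.fst (hM.injOn_fst.mono (hDM _))
      (le_min zero_le_one hγ) hwM' fun e he => ?_
    obtain ⟨⟨heM, heM'⟩, hnc⟩ : (e ∈ M ∧ e ∉ M') ∧ ¬byColumn e := by simpa [D] using he
    obtain ⟨c', hc'M', hle⟩ := (hM'.2 e (hM.1 heM) heM').resolve_left hnc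
    have hne : e.2 ≠ c' := fun h => heM' (by rwa [← h] at hc'M')
    refine ⟨(e.1, c'), mem_sdiff.2 ⟨hc'M', fun hcM => hne ?_⟩, rfl,
      hordC.le_min_one_mul hw (hM.1 heM) (hM'.1.1 hc'M') hne hle⟩
    exact congrArg Prod.snd (hM.injOn_fst heM hcM rfl)
  have hcommon : ∑ e ∈ M ∩ M', w e ≤ max 1 (β + δ) * ∑ e ∈ M' ∩ M, w e := by
    rw [inter_comm]
    exact le_mul_of_one_le_left (sum_nonneg fun b hb => (hw b (hM.1 (mem_inter.1 hb).2)).le)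
      (le_max_left _ _)
  calc ∑ e ∈ M, w e
      = ∑ e ∈ M ∩ M', w e + (∑ e ∈ D with byColumn e, w e + ∑ e ∈ D with ¬byColumn e, w e) := by
        rw [sum_filter_add_sum_filter_not, sum_inter_add_sum_sdiff]
    _ ≤ max 1 (β + δ) * ∑ e ∈ M' ∩ M, w e + (β + δ) * ∑ b ∈ M' \ M, w b := by
        rw [add_mul]; gcongr
    _ ≤ max 1 (β + δ) * ∑ e ∈ M' ∩ M, w e + max 1 (β + δ) * ∑ b ∈ M' \ M, w b := by
        gcongr
        · exact sum_nonneg hwM'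
        · exact le_max_right _ _
    _ = max 1 (β + δ) * ∑ e ∈ M', w e := by rw [← mul_add, sum_inter_add_sum_sdiff]

end

lemma max_one_add_min_one_eq {β γ : ℝ} (hβ : 0 ≤ β) :
    max 1 (β + min 1 γ) = min (1 + β) (max 1 (β + γ)) := by
  rcases le_total 1 γ with hγ | hγ
  · rw [min_eq_left hγ, min_eq_left (le_max_of_le_right (by linarith)),
      max_eq_right (by linarith), add_comm]
  · rw [min_eq_right hγ, min_eq_right (max_le (by linarith) (by linarith))]

/-- Under both the β-strong P-order and the γ-strong C-order assumptions,
the Greedy-Local algorithm is min{1+β, max{1, β+γ}}-approximate. -/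
theorem stmt3 {s q : ℕ} (E : Finset (Fin s × Fin q)) (w : Fin s × Fin q → ℝ)
    (hw : ∀ e ∈ E, 0 < w e) (β γ : ℝ) (hβ : 0 < β) (hγ : 0 < γ)
    (hordP : StrongPOrder E w β) (hordC : StrongCOrder E w γ)
    (M' : Finset (Fin s × Fin q)) (hM' : GreedyLocal E w M')
    (M : Finset (Fin s × Fin q)) (hM : IsBipMatching E M) :
    ∑ e ∈ M, w e ≤ min (1 + β) (max 1 (β + γ)) * ∑ e ∈ M', w e := by
  rw [← max_one_add_min_one_eq hβ.le]
  exact sum_le_max_mul_sum_of_greedyLocal hw hβ.le hγ.le hordP hordC hM' hM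
end

section
/- Fix an integer ℓ ≥ 0. Assume both the β-strong P-order and the γ-strong C-order assumptions hold for some β ≥ 0 and γ ≥ 0. Then every ℓ-Greedy-Local matching M' satisfies w(M) ≤ max{1, β+γ}·w(M') for every matching M of the instance. -/
/-- `availSet E M' j` = the set `A_j` of C-vertices `c` with `(p_j, c) ∈ E` that are not
blocked by an edge `(p_i, c) ∈ M'` with `i < j`. -/
def availSet {s q : ℕ} (E M' : Finset (Fin s × Fin q)) (j : Fin s) : Finset (Fin q) :=
  Finset.univ.filter (fun c : Fin q => (j, c) ∈ E ∧ ∀ i : Fin s, i < j → (i, c) ∉ M')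

/-- `firstAvail E M' ℓ j` = the set `F_j` of the min(ℓ+1, |A_j|) first elements of `A_j`
in C-order (those with at most ℓ smaller elements of `A_j`). -/
def firstAvail {s q : ℕ} (E M' : Finset (Fin s × Fin q)) (ℓ : ℕ) (j : Fin s) :
    Finset (Fin q) :=
  (availSet E M' j).filter
    (fun c : Fin q => ((availSet E M' j).filter (fun c' : Fin q => c' < c)).card ≤ ℓ)

/-- An ℓ-Greedy-Local matching: a matching `M'` such that whenever `A_j ≠ ∅`, `p_j` is matched
to a maximum-weight edge among `F_j` (the ℓ+1 first still-available C-neighbors), and whenever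
`A_j = ∅`, `p_j` is unmatched. -/
def GreedyLocalL {s q : ℕ} (E : Finset (Fin s × Fin q)) (w : Fin s × Fin q → ℝ) (ℓ : ℕ)
    (M' : Finset (Fin s × Fin q)) : Prop :=
  IsBipMatching E M' ∧ ∀ j : Fin s,
    ((availSet E M' j).Nonempty →
      ∃ c ∈ firstAvail E M' ℓ j, (j, c) ∈ M' ∧
        ∀ c' ∈ firstAvail E M' ℓ j, w (j, c') ≤ w (j, c)) ∧
    (availSet E M' j = ∅ → ∀ c : Fin q, (j, c) ∉ M')

open Finset

theorem Finset.sum_le_of_card_le_one {ι M : Type*} [AddCommMonoid M] [PartialOrder M]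
    [IsOrderedAddMonoid M] {s : Finset ι} {f : ι → M} {b : M} (hs : #s ≤ 1)
    (hf : ∀ i ∈ s, f i ≤ b) (hb : 0 ≤ b) : ∑ i ∈ s, f i ≤ b :=
  calc ∑ i ∈ s, f i ≤ #s • b := sum_le_card_nsmul s f b hf
    _ ≤ 1 • b := nsmul_le_nsmul_left hb hs
    _ = b := one_nsmul b

theorem Finset.sum_le_mul_sum_of_forall_exists_rel {α ι R : Type*} [CommSemiring R]
    [PartialOrder R] [IsOrderedRing R] {s : Finset α} {t : Finset ι} (r : α → ι → Prop)
    [DecidableRel r] {u : α → R} {v : ι → R} {K : R}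
    (hu : ∀ a ∈ s, 0 ≤ u a) (hr : ∀ a ∈ s, ∃ b ∈ t, r a b)
    (hK : ∀ b ∈ t, ∑ a ∈ s with r a b, u a ≤ K * v b) :
    ∑ a ∈ s, u a ≤ K * ∑ b ∈ t, v b :=
  calc ∑ a ∈ s, u a ≤ ∑ a ∈ s, ∑ b ∈ t with r a b, u a := by
        refine sum_le_sum fun a ha => ?_
        obtain ⟨b, hb, hab⟩ := hr a ha
        rw [sum_const]
        exact le_smul_of_one_le_left (hu a ha) (card_pos.2 ⟨b, mem_filter.2 ⟨hb, hab⟩⟩)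
    _ = ∑ b ∈ t, ∑ a ∈ s with r a b, u a := sum_comm' fun a b => by simp only [mem_filter]; tauto
    _ ≤ ∑ b ∈ t, K * v b := sum_le_sum hK
    _ = K * ∑ b ∈ t, v b := (mul_sum t v K).symm

variable {s q : ℕ}

theorem IsBipMatching.eq_of_fst_eq {E M : Finset (Fin s × Fin q)} (hM : IsBipMatching E M)
    {e₁ e₂ : Fin s × Fin q} (h₁ : e₁ ∈ M) (h₂ : e₂ ∈ M) (h : e₁.1 = e₂.1) : e₁ = e₂ :=
  by_contra fun hne => (hM.2 e₁ h₁ e₂ h₂ hne).1 h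

theorem IsBipMatching.eq_of_snd_eq {E M : Finset (Fin s × Fin q)} (hM : IsBipMatching E M)
    {e₁ e₂ : Fin s × Fin q} (h₁ : e₁ ∈ M) (h₂ : e₂ ∈ M) (h : e₁.2 = e₂.2) : e₁ = e₂ :=
  by_contra fun hne => (hM.2 e₁ h₁ e₂ h₂ hne).2 h

section Greedy

variable {ℓ : ℕ} {E M' : Finset (Fin s × Fin q)} {w : Fin s × Fin q → ℝ} {j : Fin s}
  {c d : Fin q}

theorem mem_availSet : c ∈ availSet E M' j ↔ (j, c) ∈ E ∧ ∀ i < j, (i, c) ∉ M' := by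
  simp [availSet]

theorem mem_firstAvail_of_lt (hc : c ∈ availSet E M' j) (hd : d ∈ firstAvail E M' ℓ j)
    (hcd : c < d) : c ∈ firstAvail E M' ℓ j := by
  rw [firstAvail, mem_filter] at hd ⊢
  refine ⟨hc, le_trans (card_le_card fun x hx => ?_) hd.2⟩
  rw [mem_filter] at hx ⊢
  exact ⟨hx.1, hx.2.trans hcd⟩

theorem GreedyLocalL.weight_le_of_mem_availSet (hM' : GreedyLocalL E w ℓ M') {γ : ℝ}
    (hγ : 0 ≤ γ) (hC : StrongCOrder E w γ) (hc : c ∈ availSet E M' j) (hd : (j, d) ∈ M')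
    (hcd : c ≠ d) : w (j, c) ≤ γ * w (j, d) := by
  obtain ⟨d₀, hd₀F, hd₀M, hmax⟩ := (hM'.2 j).1 ⟨c, hc⟩
  obtain rfl : d₀ = d := congrArg Prod.snd (hM'.1.eq_of_fst_eq hd₀M hd rfl)
  have hcE : (j, c) ∈ E := (mem_availSet.1 hc).1
  have hdE : (j, d₀) ∈ E := hM'.1.1 hd
  rcases hcd.lt_or_gt with hlt | hlt
  · have hle : w (j, c) ≤ w (j, d₀) := hmax c (mem_firstAvail_of_lt hc hd₀F hlt)
    calc w (j, c) ≤ w (j, d₀) := hle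
      _ ≤ γ * w (j, c) := hC c d₀ hlt j hcE hdE
      _ ≤ γ * w (j, d₀) := mul_le_mul_of_nonneg_left hle hγ
  · exact hC d₀ c hlt j hdE hcE

/-- The second disjunct is the column charge: for `f ∈ M'` it forces `e.2 ∉ availSet E M' e.1`,
as `f` blocks `e.2`. -/
def ChargedTo (E M' : Finset (Fin s × Fin q)) (e f : Fin s × Fin q) : Prop :=
  (e.2 ∈ availSet E M' e.1 ∧ f.1 = e.1) ∨ (f.2 = e.2 ∧ f.1 < e.1)

instance : DecidableRel (ChargedTo E M') := fun _ _ => inferInstanceAs (Decidable (_ ∨ _))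

theorem GreedyLocalL.exists_chargedTo (hM' : GreedyLocalL E w ℓ M') {e : Fin s × Fin q}
    (he : e ∈ E) : ∃ f ∈ M', ChargedTo E M' e f := by
  by_cases hav : e.2 ∈ availSet E M' e.1
  · obtain ⟨c, -, hcM, -⟩ := (hM'.2 e.1).1 ⟨_, hav⟩
    exact ⟨(e.1, c), hcM, .inl ⟨hav, rfl⟩⟩
  · obtain ⟨i, hi, hiM⟩ : ∃ i < e.1, (i, e.2) ∈ M' := by simpa [mem_availSet, he] using hav
    exact ⟨(i, e.2), hiM, .inr ⟨rfl, hi⟩⟩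

variable {M : Finset (Fin s × Fin q)} {β γ : ℝ} {f : Fin s × Fin q}

theorem GreedyLocalL.sum_rowCharged_le (hM' : GreedyLocalL E w ℓ M') (hM : IsBipMatching E M)
    (hγ : 0 ≤ γ) (hC : StrongCOrder E w γ) (hf : f ∈ M') (hfM : f ∉ M) (hwf : 0 ≤ w f) :
    ∑ e ∈ M with e.2 ∈ availSet E M' e.1 ∧ f.1 = e.1, w e ≤ γ * w f := by
  refine sum_le_of_card_le_one (card_le_one.2 fun a ha b hb => ?_) (fun e he => ?_)
    (mul_nonneg hγ hwf)
  · rw [mem_filter] at ha hb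
    exact hM.eq_of_fst_eq ha.1 hb.1 (ha.2.2.symm.trans hb.2.2)
  · obtain ⟨j, c⟩ := e
    obtain ⟨i, d⟩ := f
    obtain ⟨heM, hav, rfl : i = j⟩ := mem_filter.1 he
    have hne : c ≠ d := by rintro rfl; exact hfM heM
    exact hM'.weight_le_of_mem_availSet hγ hC hav hf hne

theorem sum_colCharged_le (hM' : IsBipMatching E M') (hM : IsBipMatching E M)
    (hβ : 0 ≤ β) (hP : StrongPOrder E w β) (hf : f ∈ M') (hwf : 0 ≤ w f) :
    ∑ e ∈ M with f.2 = e.2 ∧ f.1 < e.1, w e ≤ β * w f := by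
  refine sum_le_of_card_le_one (card_le_one.2 fun a ha b hb => ?_) (fun e he => ?_)
    (mul_nonneg hβ hwf)
  · rw [mem_filter] at ha hb
    exact hM.eq_of_snd_eq ha.1 hb.1 (ha.2.1.symm.trans hb.2.1)
  · obtain ⟨j, c⟩ := e
    obtain ⟨i, d⟩ := f
    obtain ⟨heM, rfl : d = c, hlt : i < j⟩ := mem_filter.1 he
    exact hP i j hlt d (hM'.1 hf) (hM.1 heM)

theorem GreedyLocalL.sum_chargedTo_le (hM' : GreedyLocalL E w ℓ M') (hM : IsBipMatching E M)
    (hβ : 0 ≤ β) (hγ : 0 ≤ γ) (hP : StrongPOrder E w β) (hC : StrongCOrder E w γ)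
    (hf : f ∈ M') (hwf : 0 ≤ w f) :
    ∑ e ∈ M with ChargedTo E M' e f, w e ≤ max 1 (β + γ) * w f := by
  by_cases hfM : f ∈ M
  · have hself : ∀ e ∈ M.filter (ChargedTo E M' · f), e = f := by
      intro e he
      obtain ⟨heM, ⟨-, h⟩ | ⟨h, -⟩⟩ := mem_filter.1 he
      · exact hM.eq_of_fst_eq heM hfM h.symm
      · exact hM.eq_of_snd_eq heM hfM h.symm
    refine sum_le_of_card_le_one (card_le_one.2 fun a ha b hb => ?_) (fun e he => ?_)
      (mul_nonneg (zero_le_one.trans (le_max_left _ _)) hwf)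
    · rw [hself a ha, hself b hb]
    · rw [hself e he]
      exact le_mul_of_one_le_left hwf (le_max_left _ _)
  · rw [show M.filter (ChargedTo E M' · f) = _ from filter_or _ _ M,
      sum_union (disjoint_filter.2 fun _ _ hrow hcol => hcol.2.ne hrow.2)]
    calc _ ≤ γ * w f + β * w f := add_le_add (hM'.sum_rowCharged_le hM hγ hC hf hfM hwf)
          (sum_colCharged_le hM'.1 hM hβ hP hf hwf)
      _ = (β + γ) * w f := by ring
      _ ≤ max 1 (β + γ) * w f := mul_le_mul_of_nonneg_right (le_max_right _ _) hwf

end Greedy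

/-- Under both the β-strong P-order and the γ-strong C-order assumptions,
the ℓ-Greedy-Local algorithm is max{1, β+γ}-approximate. -/
theorem stmt9 {s q : ℕ} (ℓ : ℕ) (E : Finset (Fin s × Fin q)) (w : Fin s × Fin q → ℝ)
    (hw : ∀ e ∈ E, 0 < w e) (β γ : ℝ) (hβ : 0 ≤ β) (hγ : 0 ≤ γ)
    (hordP : StrongPOrder E w β) (hordC : StrongCOrder E w γ)
    (M' : Finset (Fin s × Fin q)) (hM' : GreedyLocalL E w ℓ M')
    (M : Finset (Fin s × Fin q)) (hM : IsBipMatching E M) :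
    ∑ e ∈ M, w e ≤ max 1 (β + γ) * ∑ e ∈ M', w e :=
  sum_le_mul_sum_of_forall_exists_rel (ChargedTo E M') (fun e he => (hw e (hM.1 he)).le)
    (fun _ he => hM'.exists_chargedTo (hM.1 he))
    (fun f hf => hM'.sum_chargedTo_le hM hβ hγ hordP hordC hf (hw f (hM'.1.1 hf)).le)
end
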